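/- The Tate module T_p(K̄*/q^Z) = lim← (K̄*/q^Z)[p^n] is a free Z_p-module of rank 2, with basis given by the compatible systems (ε_n) and (q_n mod q^Z). -/

import Mathlib

/-- An (additive, real-valued) valuation on a field `K`, with `v 0 = ⊤`. -/
structure AddVal (K : Type*) [Field K] where
  v : K → WithTop ℝ
  v_top : ∀ x, v x = ⊤ ↔ x = 0
  v_one : v 1 = 0
  v_neg : ∀ x, v (-x) = v x
  v_mul : ∀ x y, v (x * y) = v x + v y
  v_add : ∀ x y, min (v x) (v y) ≤ v (x + y)

namespace AddVal

variable {K : Type*} [Field K] (w : AddVal K)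

/-- The additive subgroup `{x : K | v x ≥ c}`. -/
def ball (c : ℝ) : AddSubgroup K where
  carrier := {x | (c : WithTop ℝ) ≤ w.v x}
  zero_mem' := by simp [(w.v_top 0).mpr rfl]
  add_mem' := fun hx hy => le_trans (le_min hx hy) (w.v_add _ _)
  neg_mem' := fun hx => by simpa [w.v_neg] using hx

/-- The valuation ring `{x : K | v x ≥ 0}`. -/
def integers : Subring K where
  carrier := {x | (0 : WithTop ℝ) ≤ w.v x}
  zero_mem' := by simp [(w.v_top 0).mpr rfl]
  one_mem' := by simp [w.v_one]
  add_mem' := fun hx hy => le_trans (le_min hx hy) (w.v_add _ _)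
  neg_mem' := fun hx => by simpa [w.v_neg] using hx
  mul_mem' := fun hx hy => by
    simp only [Set.mem_setOf_eq, w.v_mul] at *
    exact add_nonneg hx hy

/-- The fractional ideal `{x : K | v x ≥ c}` as a module over the valuation ring. -/
def fracIdl (c : ℝ) : Submodule w.integers K where
  carrier := {x | (c : WithTop ℝ) ≤ w.v x}
  zero_mem' := by simp [(w.v_top 0).mpr rfl]
  add_mem' := fun hx hy => le_trans (le_min hx hy) (w.v_add _ _)
  smul_mem' := fun o x hx => by
    have ho : (0 : WithTop ℝ) ≤ w.v (o : K) := o.2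
    have : ((o : K) * x) = o • x := rfl
    simp only [Set.mem_setOf_eq, ← this, w.v_mul]
    simpa using add_le_add ho hx

end AddVal

/-- The `p`-adic Tate module of an abelian group `M`, realized as the group of
sequences `(x_n)` with `p^n • x_n = 0` and `p • x_{n+1} = x_n` (that is,
`lim← M[p^n]` along the multiplication-by-`p` maps). -/
def TateModule (p : ℕ) (M : Type*) [AddCommGroup M] : AddSubgroup (∀ _ : ℕ, M) where
  carrier := {x | (∀ n, p ^ n • x n = 0) ∧ ∀ n, p • x (n + 1) = x n}
  zero_mem' := ⟨fun _ => smul_zero _, fun _ => smul_zero _⟩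
  add_mem' := fun hx hy =>
    ⟨fun n => by simp [smul_add, hx.1 n, hy.1 n],
     fun n => by simp [smul_add, hx.2 n, hy.2 n]⟩
  neg_mem' := fun hx =>
    ⟨fun n => by simp [hx.1 n], fun n => by simp [hx.2 n]⟩

/-- The map on Tate modules induced by a homomorphism of abelian groups. -/
def TateMap (p : ℕ) {M N : Type*} [AddCommGroup M] [AddCommGroup N] (f : M →+ N) :
    TateModule p M →+ TateModule p N where
  toFun x := ⟨fun n => f (x.1 n),
    ⟨fun n => by rw [← map_nsmul, x.2.1 n, map_zero],
     fun n => by rw [← map_nsmul, x.2.2 n]⟩⟩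
  map_zero' := Subtype.ext (funext fun n => by simp)
  map_add' x y := Subtype.ext (funext fun n => by simp)

/-!
For `ε_n^a q_n^b` to lie in `q^ℤ`, `p^n` must divide both `a` and `b`: the valuation vanishes
on roots of unity while `p^n v(q_n) = v(q) > 0`. Conversely, if `u^(p^n) = q^m` then `u q_n^(-m)`
is a `p^n`-th root of unity, hence a power of `ε_n`. So `(ε_n, q_n mod q^ℤ)` is a `ℤ/p^n`-basis of
the `p^n`-torsion of `Lˣ/q^ℤ`, compatible with multiplication by `p`, and a compatible system of
such bases identifies the Tate module with `lim← (ℤ/p^n)² = ℤ_p × ℤ_p`.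
-/

namespace PadicInt

variable {p : ℕ} [Fact p.Prime]

theorem toZModPow_eq_intCast_appr {m n : ℕ} (h : n ≤ m) (x : ℤ_[p]) :
    toZModPow n x = ((x.appr m : ℤ) : ZMod (p ^ n)) := by
  rw [← cast_toZModPow n m h, Int.cast_natCast]
  exact ZMod.cast_natCast (pow_dvd_pow p h) _

end PadicInt

structure IsCompatibleTorsionBasis (p : ℕ) {M : Type*} [AddCommGroup M] (e f : ℕ → M) :
    Prop where
  p_smul_fst_succ : ∀ n, p • e (n + 1) = e n
  p_smul_snd_succ : ∀ n, p • f (n + 1) = f n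
  zsmul_add_zsmul_eq_zero_iff : ∀ n (a b : ℤ),
    a • e n + b • f n = 0 ↔ (a : ZMod (p ^ n)) = 0 ∧ (b : ZMod (p ^ n)) = 0
  exists_zsmul_add_zsmul_eq : ∀ n (y : M), p ^ n • y = 0 → ∃ a b : ℤ, a • e n + b • f n = y

namespace IsCompatibleTorsionBasis

open PadicInt

variable {p : ℕ} {M : Type*} [AddCommGroup M] {e f : ℕ → M}

theorem zsmul_add_zsmul_eq_iff (hb : IsCompatibleTorsionBasis p e f) {n : ℕ} {a b a' b' : ℤ} :
    a • e n + b • f n = a' • e n + b' • f n ↔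
      (a : ZMod (p ^ n)) = a' ∧ (b : ZMod (p ^ n)) = b' := by
  have hsub : a • e n + b • f n - (a' • e n + b' • f n) = (a - a') • e n + (b - b') • f n := by
    rw [sub_zsmul, sub_zsmul]; abel
  rw [← sub_eq_zero, hsub, hb.zsmul_add_zsmul_eq_zero_iff, Int.cast_sub, Int.cast_sub,
    sub_eq_zero, sub_eq_zero]

theorem p_smul_zsmul_add_zsmul_succ (hb : IsCompatibleTorsionBasis p e f) (n : ℕ) (a b : ℤ) :
    p • (a • e (n + 1) + b • f (n + 1)) = a • e n + b • f n := by
  rw [smul_add, smul_comm p a, smul_comm p b, hb.p_smul_fst_succ, hb.p_smul_snd_succ]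

theorem pow_smul_zsmul_add_zsmul (hb : IsCompatibleTorsionBasis p e f) (n : ℕ) (a b : ℤ) :
    p ^ n • (a • e n + b • f n) = 0 := by
  rw [← natCast_zsmul, smul_add, smul_smul, smul_smul, hb.zsmul_add_zsmul_eq_zero_iff,
    Int.cast_mul, Int.cast_mul, Int.cast_natCast, ZMod.natCast_self, zero_mul, zero_mul]
  exact ⟨rfl, rfl⟩

theorem mem_tateModule_fst (hb : IsCompatibleTorsionBasis p e f) : e ∈ TateModule p M :=
  ⟨fun n => by simpa using hb.pow_smul_zsmul_add_zsmul n 1 0, hb.p_smul_fst_succ⟩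

theorem mem_tateModule_snd (hb : IsCompatibleTorsionBasis p e f) : f ∈ TateModule p M :=
  ⟨fun n => by simpa using hb.pow_smul_zsmul_add_zsmul n 0 1, hb.p_smul_snd_succ⟩

variable [Fact p.Prime]

noncomputable def tateComb (e f : ℕ → M) (x : ℤ_[p] × ℤ_[p]) (n : ℕ) : M :=
  (x.1.appr n : ℤ) • e n + (x.2.appr n : ℤ) • f n

theorem tateComb_eq_iff (hb : IsCompatibleTorsionBasis p e f) {x : ℤ_[p] × ℤ_[p]} {n : ℕ}
    {a b : ℤ} :
    tateComb e f x n = a • e n + b • f n ↔ toZModPow n x.1 = a ∧ toZModPow n x.2 = b := by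
  rw [tateComb, hb.zsmul_add_zsmul_eq_iff, ← toZModPow_eq_intCast_appr le_rfl,
    ← toZModPow_eq_intCast_appr le_rfl]

theorem tateComb_mem (hb : IsCompatibleTorsionBasis p e f) (x : ℤ_[p] × ℤ_[p]) :
    tateComb e f x ∈ TateModule p M := by
  refine ⟨fun n => hb.pow_smul_zsmul_add_zsmul n _ _, fun n => ?_⟩
  rw [tateComb, hb.p_smul_zsmul_add_zsmul_succ, eq_comm, hb.tateComb_eq_iff]
  exact ⟨toZModPow_eq_intCast_appr n.le_succ _, toZModPow_eq_intCast_appr n.le_succ _⟩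

theorem tateComb_add (hb : IsCompatibleTorsionBasis p e f) (x y : ℤ_[p] × ℤ_[p]) :
    tateComb e f (x + y) = tateComb e f x + tateComb e f y := by
  funext n
  have hsum : tateComb e f x n + tateComb e f y n =
      ((x.1.appr n : ℤ) + y.1.appr n) • e n + ((x.2.appr n : ℤ) + y.2.appr n) • f n := by
    rw [tateComb, tateComb, add_zsmul, add_zsmul]; abel
  rw [Pi.add_apply, hsum, hb.tateComb_eq_iff, Prod.fst_add, Prod.snd_add, map_add, map_add,
    toZModPow_eq_intCast_appr le_rfl x.1, toZModPow_eq_intCast_appr le_rfl y.1,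
    toZModPow_eq_intCast_appr le_rfl x.2, toZModPow_eq_intCast_appr le_rfl y.2]
  push_cast
  exact ⟨rfl, rfl⟩

noncomputable def toTateModule (hb : IsCompatibleTorsionBasis p e f) :
    ℤ_[p] × ℤ_[p] →+ TateModule p M :=
  AddMonoidHom.mk' (fun x => ⟨tateComb e f x, hb.tateComb_mem x⟩)
    (fun x y => Subtype.ext (hb.tateComb_add x y))

theorem toTateModule_injective (hb : IsCompatibleTorsionBasis p e f) :
    Function.Injective hb.toTateModule := by
  refine (injective_iff_map_eq_zero _).mpr fun x hx => ?_
  have hzero : ∀ n, toZModPow n x.1 = toZModPow n 0 ∧ toZModPow n x.2 = toZModPow n 0 := by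
    intro n
    have hn : tateComb e f x n = (0 : ℤ) • e n + (0 : ℤ) • f n := by
      rw [zero_zsmul, zero_zsmul, add_zero]
      exact congrFun (congrArg Subtype.val hx) n
    rw [hb.tateComb_eq_iff, Int.cast_zero] at hn
    simpa only [map_zero] using hn
  exact Prod.ext (ext_of_toZModPow.mp fun n => (hzero n).1)
    (ext_of_toZModPow.mp fun n => (hzero n).2)

theorem toTateModule_surjective (hb : IsCompatibleTorsionBasis p e f) :
    Function.Surjective hb.toTateModule := by
  rintro ⟨t, ht⟩
  choose a b hab using fun n => hb.exists_zsmul_add_zsmul_eq n (t n) (ht.1 n)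
  have hcompat : ∀ n, (a (n + 1) : ZMod (p ^ n)) = a n ∧ (b (n + 1) : ZMod (p ^ n)) = b n := by
    intro n
    rw [← hb.zsmul_add_zsmul_eq_iff, ← hb.p_smul_zsmul_add_zsmul_succ, hab, hab, ht.2]
  have hdvd : ∀ (c : ℕ → ℤ), (∀ n, (c (n + 1) : ZMod (p ^ n)) = c n) →
      ∀ n, (p : ℤ) ^ n ∣ c (n + 1) - c n := by
    intro c hc n
    have := (ZMod.intCast_eq_intCast_iff_dvd_sub _ _ _).mp (hc n).symm
    exact_mod_cast this
  have ha := hdvd a fun n => (hcompat n).1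
  have hb' := hdvd b fun n => (hcompat n).2
  refine ⟨(ofIntSeq _ (isCauSeq_padicNorm_of_pow_dvd_sub a p ha),
    ofIntSeq _ (isCauSeq_padicNorm_of_pow_dvd_sub b p hb')), Subtype.ext (funext fun n => ?_)⟩
  change tateComb e f _ n = t n
  rw [← hab, hb.tateComb_eq_iff]
  exact ⟨toZModPow_ofIntSeq_of_pow_dvd_sub a p ha n, toZModPow_ofIntSeq_of_pow_dvd_sub b p hb' n⟩

theorem toTateModule_one_zero (hb : IsCompatibleTorsionBasis p e f) :
    hb.toTateModule (1, 0) = ⟨e, hb.mem_tateModule_fst⟩ := by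
  refine Subtype.ext (funext fun n => ?_)
  change tateComb e f _ n = e n
  have he : e n = (1 : ℤ) • e n + (0 : ℤ) • f n := by rw [one_zsmul, zero_zsmul, add_zero]
  rw [he, hb.tateComb_eq_iff]
  simp

theorem toTateModule_zero_one (hb : IsCompatibleTorsionBasis p e f) :
    hb.toTateModule (0, 1) = ⟨f, hb.mem_tateModule_snd⟩ := by
  refine Subtype.ext (funext fun n => ?_)
  change tateComb e f _ n = f n
  have hf : f n = (0 : ℤ) • e n + (1 : ℤ) • f n := by rw [one_zsmul, zero_zsmul, zero_add]
  rw [hf, hb.tateComb_eq_iff]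
  simp

theorem exists_addEquiv_prod (hb : IsCompatibleTorsionBasis p e f) :
    ∃ (he : e ∈ TateModule p M) (hf : f ∈ TateModule p M)
      (Φ : TateModule p M ≃+ ℤ_[p] × ℤ_[p]), Φ ⟨e, he⟩ = (1, 0) ∧ Φ ⟨f, hf⟩ = (0, 1) := by
  let Φ := AddEquiv.ofBijective hb.toTateModule
    ⟨hb.toTateModule_injective, hb.toTateModule_surjective⟩
  refine ⟨hb.mem_tateModule_fst, hb.mem_tateModule_snd, Φ.symm, ?_, ?_⟩
  · rw [AddEquiv.symm_apply_eq]; exact hb.toTateModule_one_zero.symm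
  · rw [AddEquiv.symm_apply_eq]; exact hb.toTateModule_zero_one.symm

end IsCompatibleTorsionBasis

section QuotientByZPowers

variable {G : Type*} [CommGroup G]

theorem pow_pow_eq_of_pow_succ_eq {p : ℕ} {r : ℕ → G} (hr : ∀ n, r (n + 1) ^ p = r n) (n : ℕ) :
    r n ^ p ^ n = r 0 := by
  induction n with
  | zero => rw [pow_zero, pow_one]
  | succ n ih => rw [pow_succ', pow_mul, hr n, ih]

theorem zpow_mul_zpow_mem_zpowers_iff {H : Type*} [CommGroup H] [IsMulTorsionFree H]
    (χ : G →* H) {q r ζ : G} {N : ℕ} (hq : χ q ≠ 1) (hζ : IsPrimitiveRoot ζ N)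
    (hr : r ^ N = q) (a b : ℤ) :
    ζ ^ a * r ^ b ∈ Subgroup.zpowers q ↔ (N : ℤ) ∣ a ∧ (N : ℤ) ∣ b := by
  have hN : N ≠ 0 := by
    rintro rfl
    rw [← hr, pow_zero, map_one] at hq
    exact hq rfl
  have hχζ : χ ζ = 1 := by
    rw [← pow_eq_one_iff_left hN, ← map_pow, hζ.pow_eq_one, map_one]
  have hχr : χ r ≠ 1 := by
    rintro h
    rw [← hr, map_pow, h, one_pow] at hq
    exact hq rfl
  constructor
  · intro hmem
    obtain ⟨k, hk⟩ := Subgroup.mem_zpowers_iff.mp hmem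
    have hb : b = N * k := by
      have hχ : χ r ^ (N * k) = χ r ^ b := by
        rw [zpow_mul, zpow_natCast, ← map_pow, hr, ← map_zpow, hk, map_mul, map_zpow, hχζ,
          one_zpow, one_mul, map_zpow]
      have h0 : χ r ^ (b - N * k) = 1 := by rw [zpow_sub, hχ, mul_inv_cancel]
      linarith [(IsMulTorsionFree.zpow_eq_one_iff_right hχr).mp h0]
    have hζa : ζ ^ a = 1 := by
      rw [hb, zpow_mul, zpow_natCast, hr] at hk
      exact mul_eq_right.mp hk.symm
    exact ⟨(hζ.zpow_eq_one_iff_dvd a).mp hζa, hb ▸ dvd_mul_right _ _⟩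
  · rintro ⟨⟨a', rfl⟩, ⟨b', rfl⟩⟩
    rw [zpow_mul, zpow_mul, zpow_natCast, zpow_natCast, hζ.pow_eq_one, hr, one_zpow, one_mul]
    exact Subgroup.zpow_mem_zpowers q b'

theorem exists_zpow_mul_zpow_eq_of_pow_eq_one {q r ζ : G} {N : ℕ}
    (hroots : ∀ u : G, u ^ N = 1 → u ∈ Subgroup.zpowers ζ) (hr : r ^ N = q)
    (y : G ⧸ Subgroup.zpowers q) (hy : y ^ N = 1) :
    ∃ a b : ℤ, (ζ : G ⧸ Subgroup.zpowers q) ^ a * (r : G ⧸ Subgroup.zpowers q) ^ b = y := by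
  obtain ⟨u, rfl⟩ := QuotientGroup.mk_surjective y
  rw [← QuotientGroup.mk_pow, QuotientGroup.eq_one_iff] at hy
  obtain ⟨m, hm⟩ := Subgroup.mem_zpowers_iff.mp hy
  have hroot : (u * r ^ (-m)) ^ N = 1 := by
    rw [mul_pow, ← hm, ← zpow_natCast (r ^ (-m)), ← zpow_mul, mul_comm (-m), zpow_mul, zpow_natCast,
      hr, ← zpow_add, add_neg_cancel, zpow_zero]
  obtain ⟨a, ha⟩ := Subgroup.mem_zpowers_iff.mp (hroots _ hroot)
  refine ⟨a, m, ?_⟩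
  rw [← QuotientGroup.mk_zpow, ← QuotientGroup.mk_zpow, ← QuotientGroup.mk_mul, ha,
    mul_assoc, ← zpow_add, neg_add_cancel, zpow_zero, mul_one]

theorem isCompatibleTorsionBasis_quotient_zpowers {H : Type*} [CommGroup H] [IsMulTorsionFree H]
    {p : ℕ} (χ : G →* H) {q : G} (hq : χ q ≠ 1) {ζ r : ℕ → G}
    (hζ : ∀ n, IsPrimitiveRoot (ζ n) (p ^ n))
    (hroots : ∀ n (u : G), u ^ p ^ n = 1 → u ∈ Subgroup.zpowers (ζ n))
    (hζc : ∀ n, ζ (n + 1) ^ p = ζ n) (hr0 : r 0 = q) (hrc : ∀ n, r (n + 1) ^ p = r n) :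
    IsCompatibleTorsionBasis p (fun n => Additive.ofMul (ζ n : G ⧸ Subgroup.zpowers q))
      (fun n => Additive.ofMul (r n : G ⧸ Subgroup.zpowers q)) := by
  have hrq : ∀ n, r n ^ p ^ n = q := fun n => hr0 ▸ pow_pow_eq_of_pow_succ_eq hrc n
  have hcomb : ∀ n (a b : ℤ), a • Additive.ofMul (ζ n : G ⧸ Subgroup.zpowers q) +
      b • Additive.ofMul (r n : G ⧸ Subgroup.zpowers q) =
        Additive.ofMul ((ζ n ^ a * r n ^ b : G) : G ⧸ Subgroup.zpowers q) := by
    intro n a b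
    rw [← ofMul_zpow, ← ofMul_zpow, ← ofMul_mul, QuotientGroup.mk_mul, QuotientGroup.mk_zpow,
      QuotientGroup.mk_zpow]
  refine ⟨fun n => ?_, fun n => ?_, fun n a b => ?_, fun n y hy => ?_⟩
  · rw [← ofMul_pow, ← QuotientGroup.mk_pow, hζc]
  · rw [← ofMul_pow, ← QuotientGroup.mk_pow, hrc]
  · rw [hcomb, ofMul_eq_zero, QuotientGroup.eq_one_iff,
      zpow_mul_zpow_mem_zpowers_iff χ hq (hζ n) (hrq n), ZMod.intCast_zmod_eq_zero_iff_dvd,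
      ZMod.intCast_zmod_eq_zero_iff_dvd]
  · obtain ⟨a, b, hab⟩ := exists_zpow_mul_zpow_eq_of_pow_eq_one (hroots n) (hrq n) y.toMul
      (by rw [← toMul_nsmul, hy, toMul_zero])
    refine ⟨a, b, ?_⟩
    rw [hcomb, QuotientGroup.mk_mul, QuotientGroup.mk_zpow, QuotientGroup.mk_zpow, hab,
      ofMul_toMul]

end QuotientByZPowers

namespace AddVal

variable {K : Type*} [Field K]

noncomputable def unitsHom (w : AddVal K) : Kˣ →* Multiplicative ℝ where
  toFun u := Multiplicative.ofAdd ((w.v u).untop ((w.v_top _).not.mpr u.ne_zero))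
  map_one' := by simp only [Units.val_one, w.v_one]; rfl
  map_mul' u u' := by
    rw [← ofAdd_add]
    refine congrArg Multiplicative.ofAdd (WithTop.coe_injective ?_)
    simp only [WithTop.coe_add, WithTop.coe_untop, Units.val_mul, w.v_mul]

theorem coe_toAdd_unitsHom (w : AddVal K) (u : Kˣ) :
    ((w.unitsHom u).toAdd : WithTop ℝ) = w.v u :=
  WithTop.coe_untop _ _

theorem unitsHom_ne_one {w : AddVal K} {u : Kˣ} (hu : w.v u ≠ 0) : w.unitsHom u ≠ 1 := by
  intro h
  rw [← coe_toAdd_unitsHom, h, toAdd_one, WithTop.coe_zero] at hu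
  exact hu rfl

end AddVal

theorem stmt16_general (p : ℕ) [Fact p.Prime] {L : Type*} [Field L]
    (w : AddVal L) (qu : Lˣ) (hq : (0 : WithTop ℝ) < w.v (qu : L))
    (ε : ℕ → Lˣ) (hε : ∀ n, IsPrimitiveRoot ((ε n : L)) (p ^ n))
    (hεc : ∀ n, ε (n + 1) ^ p = ε n)
    (qs : ℕ → Lˣ) (hq0 : qs 0 = qu) (hqs : ∀ n, qs (n + 1) ^ p = qs n) :
    ∃ (h1 : (fun n => Additive.ofMul ((ε n : Lˣ ⧸ Subgroup.zpowers qu)))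
        ∈ TateModule p (Additive (Lˣ ⧸ Subgroup.zpowers qu)))
      (h2 : (fun n => Additive.ofMul ((qs n : Lˣ ⧸ Subgroup.zpowers qu)))
        ∈ TateModule p (Additive (Lˣ ⧸ Subgroup.zpowers qu)))
      (e : TateModule p (Additive (Lˣ ⧸ Subgroup.zpowers qu)) ≃+ ℤ_[p] × ℤ_[p]),
      e ⟨_, h1⟩ = (1, 0) ∧ e ⟨_, h2⟩ = (0, 1) := by
  have hε' : ∀ n, IsPrimitiveRoot (ε n) (p ^ n) := fun n => IsPrimitiveRoot.coe_units_iff.mp (hε n)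
  have hroots : ∀ n (u : Lˣ), u ^ p ^ n = 1 → u ∈ Subgroup.zpowers (ε n) := fun n u hu => by
    rw [(hε' n).zpowers_eq]
    exact (mem_rootsOfUnity _ _).mpr hu
  exact (isCompatibleTorsionBasis_quotient_zpowers w.unitsHom (AddVal.unitsHom_ne_one hq.ne')
    hε' hroots hεc hq0 hqs).exists_addEquiv_prod

/-- The Tate module `T_p(K̄^*/q^ℤ) = lim← (K̄^*/q^ℤ)[p^n]` of the Tate curve is free
of rank `2` over `ℤ_p`, with basis given by the compatible systems `(ε_n)` (primitive
`p^n`-th roots of unity) and `(q_n mod q^ℤ)` (compatible `p^n`-th roots of `q`):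
there is an isomorphism onto `ℤ_p × ℤ_p` sending these two elements to the standard
basis. -/
theorem stmt16 (p : ℕ) [Fact p.Prime] {L : Type*} [Field L] [IsAlgClosed L]
    (w : AddVal L) (qu : Lˣ) (hq : (0 : WithTop ℝ) < w.v (qu : L))
    (ε : ℕ → Lˣ) (hε : ∀ n, IsPrimitiveRoot ((ε n : L)) (p ^ n))
    (hεc : ∀ n, ε (n + 1) ^ p = ε n)
    (qs : ℕ → Lˣ) (hq0 : qs 0 = qu) (hqs : ∀ n, qs (n + 1) ^ p = qs n) :
    ∃ (h1 : (fun n => Additive.ofMul ((ε n : Lˣ ⧸ Subgroup.zpowers qu)))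
        ∈ TateModule p (Additive (Lˣ ⧸ Subgroup.zpowers qu)))
      (h2 : (fun n => Additive.ofMul ((qs n : Lˣ ⧸ Subgroup.zpowers qu)))
        ∈ TateModule p (Additive (Lˣ ⧸ Subgroup.zpowers qu)))
      (e : TateModule p (Additive (Lˣ ⧸ Subgroup.zpowers qu)) ≃+ ℤ_[p] × ℤ_[p]),
      e ⟨_, h1⟩ = (1, 0) ∧ e ⟨_, h2⟩ = (0, 1) :=
  stmt16_general p w qu hq ε hε hεc qs hq0 hqs
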